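/- For every tree T not isomorphic to K₂: (i) |Shed(T)| ≤ α(T); (ii) if Shed(T) is an independent set, then |Shed(T)| ≤ α(T) − 1. -/

import Mathlib

open SimpleGraph

variable {V : Type*} [Fintype V] [DecidableEq V]

/-- A set of vertices is independent: no two of its vertices are adjacent. -/
def isIndep (G : SimpleGraph V) (S : Finset V) : Prop :=
  ∀ ⦃a⦄, a ∈ S → ∀ ⦃b⦄, b ∈ S → ¬ G.Adj a b

/-- The independence number `α(G)`. -/
noncomputable def indepNum (G : SimpleGraph V) : ℕ :=
  sSup {n | ∃ S : Finset V, isIndep G S ∧ S.card = n}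

/-- A maximum independent set: an independent set of size `α(G)`. -/
def isMaxIndep (G : SimpleGraph V) (S : Finset V) : Prop :=
  isIndep G S ∧ S.card = _root_.indepNum G

/-- `G` has two disjoint maximum independent sets. -/
def hasTwoDisjointMaxIndep (G : SimpleGraph V) : Prop :=
  ∃ S₁ S₂ : Finset V, isMaxIndep G S₁ ∧ isMaxIndep G S₂ ∧ Disjoint S₁ S₂

/-- A matching: a set of edges of `G`, pairwise sharing no vertex. -/
def isMatchingF (G : SimpleGraph V) (M : Finset (Sym2 V)) : Prop :=
  (∀ e ∈ M, e ∈ G.edgeSet) ∧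
  (∀ e ∈ M, ∀ f ∈ M, e ≠ f → ∀ v : V, v ∈ e → v ∉ f)

/-- The matching number `μ(G)`. -/
noncomputable def matchNum (G : SimpleGraph V) : ℕ :=
  sSup {n | ∃ M : Finset (Sym2 V), isMatchingF G M ∧ M.card = n}

/-- A shedding vertex: for every independent set `S` of `G − N[v]` there is a
neighbor `u` of `v` with `S ∪ {u}` independent. -/
def IsShedding (G : SimpleGraph V) (v : V) : Prop :=
  ∀ S : Finset V, isIndep G S → (∀ w ∈ S, w ≠ v ∧ ¬ G.Adj v w) →
    ∃ u, G.Adj v u ∧ isIndep G (insert u S)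

/-- A perfect matching of `G`: a matching covering every vertex. -/
def hasPerfectMatchingF (G : SimpleGraph V) : Prop :=
  ∃ M : Finset (Sym2 V), isMatchingF G M ∧ ∀ v : V, ∃ e ∈ M, v ∈ e

/-- The disjoint union of `k` copies of `K₂`. -/
def copiesK2 (k : ℕ) : SimpleGraph (Fin k × Fin 2) :=
  SimpleGraph.fromRel (fun p q => p.1 = q.1)

/-!
Every shedding vertex `v` of a tree has a pendant neighbour `l v`: otherwise, choosing for each
neighbour `u` of `v` a further neighbour `g u ≠ v` gives an independent set (all of it lies in the
colour class of `v` under the 2-colouring) outside `N[v]` that no neighbour of `v` extends. The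
vertices `l v` are distinct and, outside `K₂`, pairwise non-adjacent, so they form an independent
set of size `|Shed(T)|`. If `Shed(T)` is independent, a neighbour `w ≠ l v` of a shedding vertex
`v` (one exists outside `K₂`) is not shedding, hence adjacent to no `l v'`, and can be added.
-/

namespace SimpleGraph

variable {G : SimpleGraph V}

omit [DecidableEq V] in
lemma card_le_indepNum {S : Finset V} (hS : isIndep G S) : S.card ≤ _root_.indepNum G :=
  le_csSup ⟨Fintype.card V, fun _ ⟨S', _, hc⟩ => hc ▸ S'.card_le_univ⟩ ⟨S, hS, rfl⟩

lemma IsShedding.exists_neighborSet_eq_singleton (hG : G.Colorable 2) {v : V}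
    (hv : IsShedding G v) : ∃ u, G.neighborSet u = {v} := by
  classical
  obtain ⟨c⟩ := hG
  by_contra! hno
  have hbeyond : ∀ u, G.Adj v u → ∃ x, G.Adj u x ∧ x ≠ v := by
    intro u hu
    by_contra! h
    exact hno u (Set.eq_singleton_iff_unique_mem.mpr ⟨hu.symm, h⟩)
  choose! g hg using hbeyond
  have hcolor : ∀ u, G.Adj v u → c (g u) = c v := by
    intro u hu
    have h₁ := c.valid hu
    have h₂ := c.valid (hg u hu).1
    omega
  obtain ⟨u, hu, hindep⟩ := hv ((G.neighborFinset v).image g)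
    (by
      simp only [isIndep, Finset.mem_image, mem_neighborFinset]
      rintro _ ⟨a, ha, rfl⟩ _ ⟨b, hb, rfl⟩ hab
      exact c.valid hab ((hcolor a ha).trans (hcolor b hb).symm))
    (by
      simp only [Finset.mem_image, mem_neighborFinset]
      rintro _ ⟨a, ha, rfl⟩
      exact ⟨(hg a ha).2, fun h => c.valid h (hcolor a ha).symm⟩)
  have hgu : g u ∈ (G.neighborFinset v).image g :=
    Finset.mem_image_of_mem g ((G.mem_neighborFinset v u).mpr hu)
  exact hindep (Finset.mem_insert_self u _) (Finset.mem_insert_of_mem hgu) (hg u hu).1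

lemma Connected.nonempty_iso_top_of_neighborSet_eq_singleton (hc : G.Connected) {a b : V}
    (ha : G.neighborSet a = {b}) (hb : G.neighborSet b = {a}) :
    Nonempty (G ≃g (⊤ : SimpleGraph (Fin 2))) := by
  have hab : G.Adj a b := by simpa using ha.ge rfl
  have hall : ∀ x, x = a ∨ x = b := by
    intro x
    induction (reachable_iff_reflTransGen a x).mp (hc.preconnected a x) with
    | refl => exact .inl rfl
    | tail _ hyz ih =>
      rcases ih with rfl | rfl
      · exact .inr (by rw [← Set.mem_singleton_iff, ← ha]; exact hyz)
      · exact .inl (by rw [← Set.mem_singleton_iff, ← hb]; exact hyz)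
  have htop : G = ⊤ := by
    ext x y
    rcases hall x with rfl | rfl <;> rcases hall y with rfl | rfl <;>
      simp [hab, hab.symm, hab.ne, hab.ne.symm]
  have hcard : Fintype.card V = 2 := by
    rw [← Finset.card_univ, show (Finset.univ : Finset V) = {a, b} by ext x; simpa using hall x,
      Finset.card_pair hab.ne]
  subst htop
  exact ⟨Iso.completeGraph (Fintype.equivFinOfCardEq hcard)⟩

lemma Connected.not_adj_of_neighborSet_eq_singleton (hc : G.Connected)
    (hK2 : IsEmpty (G ≃g (⊤ : SimpleGraph (Fin 2)))) {a a' b b' : V}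
    (ha : G.neighborSet a = {a'}) (hb : G.neighborSet b = {b'}) : ¬ G.Adj a b := by
  intro hab
  obtain rfl : b = a' := by rwa [← Set.mem_singleton_iff, ← ha]
  obtain rfl : a = b' := by rwa [← Set.mem_singleton_iff, ← hb, mem_neighborSet, adj_comm]
  exact hK2.false (hc.nonempty_iso_top_of_neighborSet_eq_singleton ha hb).some

lemma Connected.exists_adj_ne_of_neighborSet_eq_singleton (hc : G.Connected)
    (hK2 : IsEmpty (G ≃g (⊤ : SimpleGraph (Fin 2)))) {u v : V} (hu : G.neighborSet u = {v}) :
    ∃ w, G.Adj v w ∧ w ≠ u := by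
  by_contra! h
  have hvu : G.Adj v u := (hu.ge rfl).symm
  exact hc.not_adj_of_neighborSet_eq_singleton hK2
    (Set.eq_singleton_iff_unique_mem.mpr ⟨hvu, h⟩) hu hvu

section PendantImage

variable {l : V → V} {S : Finset V} (hl : ∀ v ∈ S, G.neighborSet (l v) = {v})
include hl

omit [Fintype V] in
lemma card_image_of_neighborSet_eq_singleton : (S.image l).card = S.card :=
  Finset.card_image_of_injOn fun x hx y hy hxy =>
    Set.singleton_injective (by rw [← hl x hx, ← hl y hy, hxy])

omit [Fintype V] in
lemma notMem_image_of_neighborSet_eq_singleton {v w : V} (hvw : G.Adj v w)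
    (hwl : w ≠ l v) : w ∉ S.image l := by
  simp only [Finset.mem_image, not_exists, not_and]
  rintro x hx rfl
  obtain rfl : v = x := by simpa [← mem_neighborSet, hl x hx] using hvw.symm
  exact hwl rfl

lemma Connected.isIndep_image_of_neighborSet_eq_singleton (hc : G.Connected)
    (hK2 : IsEmpty (G ≃g (⊤ : SimpleGraph (Fin 2)))) : isIndep G (S.image l) := by
  simp only [isIndep, Finset.mem_image]
  rintro _ ⟨x, hx, rfl⟩ _ ⟨y, hy, rfl⟩
  exact hc.not_adj_of_neighborSet_eq_singleton hK2 (hl x hx) (hl y hy)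

lemma Connected.isIndep_insert_image_of_neighborSet_eq_singleton (hc : G.Connected)
    (hK2 : IsEmpty (G ≃g (⊤ : SimpleGraph (Fin 2)))) {w : V} (hw : w ∉ S) :
    isIndep G (insert w (S.image l)) := by
  have hwl : ∀ x ∈ S, ¬ G.Adj w (l x) := fun x hx hadj => by
    rw [adj_comm, ← mem_neighborSet, hl x hx, Set.mem_singleton_iff] at hadj
    exact hw (hadj ▸ hx)
  have hindep := hc.isIndep_image_of_neighborSet_eq_singleton hl hK2
  simp only [isIndep, Finset.mem_insert, Finset.mem_image]
  rintro a (rfl | ⟨x, hx, rfl⟩) b (rfl | ⟨y, hy, rfl⟩)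
  · exact G.irrefl
  · exact hwl y hy
  · exact fun h => hwl x hx h.symm
  · exact hindep (Finset.mem_image_of_mem l hx) (Finset.mem_image_of_mem l hy)

end PendantImage

end SimpleGraph

/-- For a tree `T ≠ K₂`: `|Shed(T)| ≤ α(T)`, and if `Shed(T)` is independent
then `|Shed(T)| ≤ α(T) − 1`. -/
theorem stmt18 (T : SimpleGraph V) (hT : T.IsTree)
    (hK2 : IsEmpty (T ≃g (⊤ : SimpleGraph (Fin 2)))) :
    {v : V | IsShedding T v}.ncard ≤ _root_.indepNum T ∧
      ({v : V | IsShedding T v}.Pairwise (fun a b => ¬ T.Adj a b) →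
        {v : V | IsShedding T v}.ncard ≤ _root_.indepNum T - 1) := by
  classical
  choose! l hl using fun v (hv : IsShedding T v) =>
    hv.exists_neighborSet_eq_singleton hT.colorable_two
  set S := Finset.univ.filter (IsShedding T)
  have hSl : ∀ v ∈ S, T.neighborSet (l v) = {v} := fun v hv => hl v (Finset.mem_filter.mp hv).2
  have hcard : {v | IsShedding T v}.ncard = S.card := by
    rw [← Set.ncard_coe_finset]; simp [S]
  rw [hcard, ← card_image_of_neighborSet_eq_singleton hSl]
  refine ⟨card_le_indepNum (hT.connected.isIndep_image_of_neighborSet_eq_singleton hSl hK2),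
    fun hpair => ?_⟩
  rcases S.eq_empty_or_nonempty with hS | ⟨v, hv⟩
  · simp [hS]
  obtain ⟨w, hvw, hwl⟩ := hT.connected.exists_adj_ne_of_neighborSet_eq_singleton hK2 (hSl v hv)
  have hwS : w ∉ S := fun hw => hpair (by simpa [S] using hv) (by simpa [S] using hw) hvw.ne hvw
  have hle := card_le_indepNum
    (hT.connected.isIndep_insert_image_of_neighborSet_eq_singleton hSl hK2 hwS)
  rw [Finset.card_insert_of_notMem (notMem_image_of_neighborSet_eq_singleton hSl hvw hwl)] at hle
  omega
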